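/- For every integer p ≥ 2, the group presented by ⟨a, t | a^p = 1, [a, t^k a t^{−k}] = 1 for all integers k ≥ 1⟩ is isomorphic to the lamplighter group L_p, via the isomorphism sending a and t to the canonical generators a and t of L_p. -/

import Mathlib

/-- The action of `ℤ` on `⨁_{i∈ℤ} ℤ/nℤ` by shifting coordinates. -/
noncomputable def lampShift (n : ℕ) :
    Multiplicative ℤ →* MulAut (Multiplicative (ℤ →₀ ZMod n)) :=
  zpowersHom _ (AddEquiv.toMultiplicative (Finsupp.domCongr (Equiv.addRight (1 : ℤ))))

/-- The lamplighter group `L_n = (ℤ/nℤ) ≀ ℤ`, the restricted wreath product, i.e. the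
semidirect product `(⨁_{i∈ℤ} ℤ/nℤ) ⋊ ℤ` where `ℤ` acts by shifting coordinates. -/
abbrev Lamplighter (n : ℕ) : Type :=
  SemidirectProduct (Multiplicative (ℤ →₀ ZMod n)) (Multiplicative ℤ) (lampShift n)

/-- The generator `a` of the lamplighter group: generator of the copy of `ℤ/nℤ` at
position `0`. -/
noncomputable def Lamplighter.a (n : ℕ) : Lamplighter n :=
  SemidirectProduct.inl (Multiplicative.ofAdd (Finsupp.single (0 : ℤ) (1 : ZMod n)))

/-- The generator `t` of the lamplighter group: the generator of the acting `ℤ`. -/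
noncomputable def Lamplighter.t (n : ℕ) : Lamplighter n :=
  SemidirectProduct.inr (Multiplicative.ofAdd (1 : ℤ))

open scoped commutatorElement in
/-- Relators for the presentation `⟨a, t | aᵖ = 1, [a, tᵏat⁻ᵏ] = 1 (k ≥ 1)⟩` of the
lamplighter group, with `a` and `t` corresponding to `false` and `true`. -/
def lampRels (p : ℕ) : Set (FreeGroup Bool) :=
  {FreeGroup.of false ^ p} ∪
    {r | ∃ k : ℕ, 1 ≤ k ∧
      r = ⁅FreeGroup.of false,
            FreeGroup.of true ^ k * FreeGroup.of false * (FreeGroup.of true ^ k)⁻¹⁆}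

/-!
In the presented group `G` write `cᵢ = tⁱ a t⁻ⁱ`. Conjugating the relation `[a, cₖ] = 1` by `tⁱ`
shows that all the `cᵢ` commute, and each has order dividing `p`; so `single i 1 ↦ cᵢ` defines a
homomorphism `⨁ ℤ/p → G` which intertwines the shift with conjugation by `t`. Together with
`t` it gives a homomorphism `L_p → G`, inverse to the evident map `G → L_p` (the relations hold
in `L_p` because its base group is abelian); both composites are the identity on generators.
-/

namespace Lamplighter

open Multiplicative Finsupp SemidirectProduct

variable {n : ℕ}

lemma lampShift_one_single (j : ℤ) (v : ZMod n) :
    lampShift n (ofAdd 1) (ofAdd (single j v)) = ofAdd (single (j + 1) v) := by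
  simp [lampShift]

lemma lampShift_single (m j : ℤ) (v : ZMod n) :
    lampShift n (ofAdd m) (ofAdd (single j v)) = ofAdd (single (j + m) v) := by
  induction m using Int.induction_on generalizing j with
  | zero => simp
  | succ k ih =>
    rw [ofAdd_add, map_mul, MulAut.mul_apply, lampShift_one_single, ih, add_right_comm,
      add_assoc]
  | pred k ih =>
    have h := ih (j - 1)
    rw [show -(k : ℤ) = (-k - 1) + 1 by ring, ofAdd_add, map_mul, MulAut.mul_apply,
      lampShift_one_single, sub_add_cancel] at h
    rw [h]
    ring_nf

lemma hom_ext_single {G : Type*} [Group G] {f g : Multiplicative (ℤ →₀ ZMod n) →* G}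
    (h : ∀ j, f (ofAdd (single j 1)) = g (ofAdd (single j 1))) : f = g := by
  refine Finsupp.mulHom_ext fun j v => ?_
  obtain ⟨k, rfl⟩ := ZMod.intCast_surjective v
  rw [← zsmul_one, ← smul_single, ofAdd_zsmul, map_zpow, map_zpow, h]

lemma a_pow_self : a n ^ n = 1 := by
  rw [a, ← map_pow, ← ofAdd_nsmul, smul_single, nsmul_one, ZMod.natCast_self, single_zero,
    ofAdd_zero, map_one]

lemma t_zpow (m : ℤ) : t n ^ m = inr (ofAdd m) := by
  rw [t, ← map_zpow, ← ofAdd_zsmul, smul_eq_mul, mul_one]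

lemma t_zpow_conj_inl_single (m j : ℤ) (v : ZMod n) :
    t n ^ m * inl (ofAdd (single j v)) * (t n ^ m)⁻¹ = inl (ofAdd (single (j + m) v)) := by
  rw [t_zpow, ← map_inv, ← inl_aut, lampShift_single]

lemma t_zpow_conj_a (m : ℤ) : t n ^ m * a n * (t n ^ m)⁻¹ = inl (ofAdd (single m 1)) := by
  rw [a, t_zpow_conj_inl_single, zero_add]

lemma commute_a_t_zpow_conj_a (m : ℤ) : Commute (a n) (t n ^ m * a n * (t n ^ m)⁻¹) := by
  rw [t_zpow_conj_a, a]
  exact (Commute.all _ _).map inl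

end Lamplighter

namespace LampPresentation

open Multiplicative Finsupp SemidirectProduct
open scoped commutatorElement IsMulCommutative

variable (p : ℕ)

def a : PresentedGroup (lampRels p) := PresentedGroup.of false

def t : PresentedGroup (lampRels p) := PresentedGroup.of true

def lamp (i : ℤ) : PresentedGroup (lampRels p) := t p ^ i * a p * (t p ^ i)⁻¹

variable {p}

lemma a_pow_self : a p ^ p = 1 := by
  have h := PresentedGroup.one_of_mem (rels := lampRels p) (Or.inl rfl)
  rwa [map_pow] at h

lemma lamp_zero : lamp p 0 = a p := by simp [lamp]

lemma lamp_pow_self (i : ℤ) : lamp p i ^ p = 1 := by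
  rw [lamp, conj_pow, a_pow_self, mul_one, mul_inv_cancel]

lemma t_zpow_conj_lamp (m i : ℤ) : t p ^ m * lamp p i * (t p ^ m)⁻¹ = lamp p (m + i) := by
  simp only [lamp, zpow_add]
  group

lemma commute_a_lamp {i : ℤ} (hi : 0 ≤ i) : Commute (a p) (lamp p i) := by
  lift i to ℕ using hi
  rcases i.eq_zero_or_pos with rfl | hpos
  · rw [Nat.cast_zero, lamp_zero]
  have h := PresentedGroup.one_of_mem (rels := lampRels p) (Or.inr ⟨i, hpos, rfl⟩)
  rw [map_commutatorElement, map_mul, map_mul, map_inv, map_pow] at h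
  rw [lamp, zpow_natCast]
  exact commutatorElement_eq_one_iff_commute.mp h

lemma commute_lamp (i j : ℤ) : Commute (lamp p i) (lamp p j) := by
  wlog hij : i ≤ j generalizing i j
  · exact (this j i (by omega)).symm
  have h := (commute_a_lamp (p := p) (sub_nonneg.mpr hij)).map (MulAut.conj (t p ^ i)).toMonoidHom
  rwa [← lamp_zero, MulEquiv.coe_toMonoidHom, MulAut.conj_apply, MulAut.conj_apply,
    t_zpow_conj_lamp, t_zpow_conj_lamp, add_zero, add_sub_cancel] at h

variable (p)

noncomputable section

def lampSubgroup : Subgroup (PresentedGroup (lampRels p)) :=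
  Subgroup.closure (Set.range (lamp p))

instance : IsMulCommutative (lampSubgroup p) :=
  Subgroup.isMulCommutative_closure (by rintro _ ⟨i, rfl⟩ _ ⟨j, rfl⟩; exact commute_lamp i j)

def lampZModHom (i : ℤ) : ZMod p →+ Additive (lampSubgroup p) :=
  ZMod.lift p ⟨zmultiplesHom _ (Additive.ofMul ⟨lamp p i, Subgroup.subset_closure ⟨i, rfl⟩⟩), by
    rw [zmultiplesHom_apply, natCast_zsmul, ← ofMul_pow, ofMul_eq_zero]
    exact Subtype.ext (lamp_pow_self i)⟩

def lampsHom : Multiplicative (ℤ →₀ ZMod p) →* PresentedGroup (lampRels p) :=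
  (lampSubgroup p).subtype.comp
    (AddMonoidHom.toMultiplicativeLeft (liftAddHom (lampZModHom p)))

end

variable {p}

lemma lampsHom_single_one (i : ℤ) : lampsHom p (ofAdd (single i 1)) = lamp p i := by
  have h : lampZModHom p i 1 = Additive.ofMul ⟨lamp p i, Subgroup.subset_closure ⟨i, rfl⟩⟩ := by
    rw [lampZModHom, ← Int.cast_one, ZMod.lift_coe, zmultiplesHom_apply, one_zsmul]
  simp [lampsHom, h]

variable (p)

noncomputable section

def toLamplighter : PresentedGroup (lampRels p) →* Lamplighter p :=
  PresentedGroup.toGroup (f := fun b => bif b then Lamplighter.t p else Lamplighter.a p) <| by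
    rintro r (rfl | ⟨k, -, rfl⟩)
    · rw [map_pow, FreeGroup.lift_apply_of]
      exact Lamplighter.a_pow_self (n := p)
    · rw [map_commutatorElement, map_mul, map_mul, map_inv, map_pow, FreeGroup.lift_apply_of,
        FreeGroup.lift_apply_of, commutatorElement_eq_one_iff_commute, ← zpow_natCast]
      exact Lamplighter.commute_a_t_zpow_conj_a (n := p) k

def ofLamplighter : Lamplighter p →* PresentedGroup (lampRels p) :=
  SemidirectProduct.lift (lampsHom p) (zpowersHom _ (t p)) fun m =>
    Lamplighter.hom_ext_single fun j => by
      obtain ⟨m, rfl⟩ := ofAdd.surjective m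
      rw [MonoidHom.comp_apply, MonoidHom.comp_apply, MulEquiv.coe_toMonoidHom,
        MulEquiv.coe_toMonoidHom, Lamplighter.lampShift_single, lampsHom_single_one,
        MulAut.conj_apply, zpowersHom_apply, toAdd_ofAdd, lampsHom_single_one, t_zpow_conj_lamp,
        add_comm]

end

variable {p}

lemma toLamplighter_a : toLamplighter p (a p) = Lamplighter.a p := PresentedGroup.toGroup.of _

lemma toLamplighter_t : toLamplighter p (t p) = Lamplighter.t p := PresentedGroup.toGroup.of _

lemma toLamplighter_lamp (i : ℤ) : toLamplighter p (lamp p i) = inl (ofAdd (single i 1)) := by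
  rw [lamp, map_mul, map_mul, map_inv, map_zpow, toLamplighter_a, toLamplighter_t,
    Lamplighter.t_zpow_conj_a]

lemma ofLamplighter_inl_single_one (j : ℤ) :
    ofLamplighter p (inl (ofAdd (single j 1))) = lamp p j := by
  rw [ofLamplighter, lift_inl, lampsHom_single_one]

lemma ofLamplighter_inr (m : ℤ) : ofLamplighter p (inr (ofAdd m)) = t p ^ m := by
  rw [ofLamplighter, lift_inr, zpowersHom_apply, toAdd_ofAdd]

lemma ofLamplighter_comp_toLamplighter :
    (ofLamplighter p).comp (toLamplighter p) = MonoidHom.id _ := by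
  refine PresentedGroup.ext fun b => ?_
  cases b
  · change ofLamplighter p (toLamplighter p (a p)) = a p
    rw [toLamplighter_a, Lamplighter.a, ← lamp_zero, ofLamplighter_inl_single_one]
  · change ofLamplighter p (toLamplighter p (t p)) = t p
    rw [toLamplighter_t, Lamplighter.t, ofLamplighter_inr, zpow_one]

lemma toLamplighter_comp_ofLamplighter :
    (toLamplighter p).comp (ofLamplighter p) = MonoidHom.id _ := by
  refine SemidirectProduct.hom_ext (Lamplighter.hom_ext_single fun j => ?_)
    (MonoidHom.ext_mint ?_)
  · change toLamplighter p (ofLamplighter p (inl (ofAdd (single j 1)))) = _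
    rw [ofLamplighter_inl_single_one, toLamplighter_lamp]
    rfl
  · change toLamplighter p (ofLamplighter p (inr (ofAdd 1))) = inr (ofAdd 1)
    rw [ofLamplighter_inr, zpow_one, toLamplighter_t, Lamplighter.t]

end LampPresentation

theorem lamplighter_presentation_general (p : ℕ) :
    ∃ e : PresentedGroup (lampRels p) ≃* Lamplighter p,
      e (PresentedGroup.of false) = Lamplighter.a p ∧
        e (PresentedGroup.of true) = Lamplighter.t p :=
  ⟨MonoidHom.toMulEquiv _ _ LampPresentation.ofLamplighter_comp_toLamplighter
      LampPresentation.toLamplighter_comp_ofLamplighter,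
    LampPresentation.toLamplighter_a, LampPresentation.toLamplighter_t⟩

/-- For every integer `p ≥ 2`, the group presented by
`⟨a, t | aᵖ = 1, [a, tᵏat⁻ᵏ] = 1 for all integers k ≥ 1⟩` is isomorphic to the
lamplighter group `L_p`, via the isomorphism sending `a` and `t` to the canonical
generators `a` and `t` of `L_p`. -/
theorem lamplighter_presentation (p : ℕ) (hp : 2 ≤ p) :
    ∃ e : PresentedGroup (lampRels p) ≃* Lamplighter p,
      e (PresentedGroup.of false) = Lamplighter.a p ∧
        e (PresentedGroup.of true) = Lamplighter.t p :=
  lamplighter_presentation_general p
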